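/- arXiv:2212.02954 — 2 statements merged into one kernel-verified Lean document; each statement's English description precedes it below -/
import Mathlib

section
/- Let Y be a real vector space, L : Y × Y → ℝ a function of the form L(u,z) = J(u) + F(z) − B(u)(z) with J, F linear and B bilinear, and let Y₀ ⊆ Y be a subspace. If (u,z) ∈ Y × Y is a stationary point of L on Y and (u₀,z₀) ∈ Y₀ × Y₀ is a stationary point of L restricted to Y₀ × Y₀, then J(u) − J(u₀) = ½·ρ(u₀)(z − z̃) + ½·ρ*(u₀,z₀)(u − ũ) for arbitrary z̃, ũ ∈ Y₀, where ρ(u₀)(φ) := F(φ) − B(u₀)(φ) and ρ*(u₀,z₀)(φ) := J(φ) − B(φ)(z₀). (For bilinear B and linear J the remainder term vanishes.) -/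
/-!
Galerkin orthogonality lets one drop the weights `z̃, ũ ∈ Y₀`, and then each residual equals
the goal error on its own: `ρ(u₀)(z) = B(u)(z) - B(u₀)(z) = J(u) - J(u₀)` by the primal and
dual equations on `Y`, and `ρ*(u₀, z₀)(u) = J(u) - F(z₀) = J(u) - B(u₀)(z₀) = J(u) - J(u₀)`
by the primal equation on `Y` and both discrete equations. The identity is their average.
-/

section Residuals

variable {R M N : Type*} [CommRing R] [AddCommGroup M] [Module R M] [AddCommGroup N] [Module R N]
  (J F : M →ₗ[R] N) (B : M →ₗ[R] M →ₗ[R] N)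

def primalResidual (u : M) : M →ₗ[R] N := F - B u

def dualResidual (z : M) : M →ₗ[R] N := J - B.flip z

theorem primalResidual_apply (u φ : M) : primalResidual F B u φ = F φ - B u φ := rfl

theorem dualResidual_apply (z φ : M) : dualResidual J B z φ = J φ - B φ z := rfl

variable {J F B} {S : Submodule R M} {u z u₀ z₀ : M}

theorem primalResidual_eq_zero_of_mem (hprimal₀ : ∀ φ ∈ S, B u₀ φ = F φ) {φ : M} (hφ : φ ∈ S) :
    primalResidual F B u₀ φ = 0 := by
  rw [primalResidual_apply, hprimal₀ φ hφ, sub_self]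

theorem dualResidual_eq_zero_of_mem (hdual₀ : ∀ φ ∈ S, B φ z₀ = J φ) {φ : M} (hφ : φ ∈ S) :
    dualResidual J B z₀ φ = 0 := by
  rw [dualResidual_apply, hdual₀ φ hφ, sub_self]

theorem primalResidual_apply_dual_solution (hprimal : ∀ φ, B u φ = F φ)
    (hdual : ∀ φ, B φ z = J φ) (u₀ : M) :
    primalResidual F B u₀ z = J u - J u₀ := by
  rw [primalResidual_apply, ← hprimal, hdual, hdual]

theorem dualResidual_apply_primal_solution (hprimal : ∀ φ, B u φ = F φ)
    (hprimal₀ : ∀ φ ∈ S, B u₀ φ = F φ) (hdual₀ : ∀ φ ∈ S, B φ z₀ = J φ)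
    (hu₀ : u₀ ∈ S) (hz₀ : z₀ ∈ S) :
    dualResidual J B z₀ u = J u - J u₀ := by
  rw [dualResidual_apply, hprimal, ← hprimal₀ z₀ hz₀, hdual₀ u₀ hu₀]

end Residuals

/-- DWR error identity in the linear setting: the goal error is half the primal
residual at the dual weight plus half the dual residual at the primal weight. -/
theorem dwr_error_identity_linear
    {Y : Type*} [AddCommGroup Y] [Module ℝ Y] (Y₀ : Submodule ℝ Y)
    (J F : Y →ₗ[ℝ] ℝ) (B : Y →ₗ[ℝ] Y →ₗ[ℝ] ℝ)
    (u z u₀ z₀ : Y) (hu₀ : u₀ ∈ Y₀) (hz₀ : z₀ ∈ Y₀)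
    (hprimal : ∀ φ : Y, B u φ = F φ)
    (hdual : ∀ φ : Y, B φ z = J φ)
    (hprimal₀ : ∀ φ ∈ Y₀, B u₀ φ = F φ)
    (hdual₀ : ∀ φ ∈ Y₀, B φ z₀ = J φ) :
    ∀ zt ∈ Y₀, ∀ ut ∈ Y₀,
      J u - J u₀ =
        (1/2) * (F (z - zt) - B u₀ (z - zt)) + (1/2) * (J (u - ut) - B (u - ut) z₀) := by
  intro zt hzt ut hut
  have hprimalWeight : primalResidual F B u₀ (z - zt) = J u - J u₀ := by
    rw [map_sub, primalResidual_eq_zero_of_mem hprimal₀ hzt, sub_zero,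
      primalResidual_apply_dual_solution hprimal hdual]
  have hdualWeight : dualResidual J B z₀ (u - ut) = J u - J u₀ := by
    rw [map_sub, dualResidual_eq_zero_of_mem hdual₀ hut, sub_zero,
      dualResidual_apply_primal_solution hprimal hprimal₀ hdual₀ hu₀ hz₀]
  rw [primalResidual_apply] at hprimalWeight
  rw [dualResidual_apply] at hdualWeight
  rw [hprimalWeight, hdualWeight]
  ring
end

section
/- Let B be a bilinear form on a vector space Y, F, J linear functionals, and let u, u₀ solve B(u)(φ) = F(φ) for all φ ∈ Y and B(u₀)(φ₀) = F(φ₀) for all φ₀ in a subspace Y₀. If z solves the dual problem B(φ)(z) = J(φ) for all φ ∈ Y, then for every z̃ ∈ Y₀: J(u) − J(u₀) = ρ(u₀)(z − z̃), where ρ(u₀)(φ) = F(φ) − B(u₀)(φ). In particular the goal error equals the primal residual applied to the dual weight z − z̃. -/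
section Galerkin

variable {R M N P : Type*} [CommRing R] [AddCommGroup M] [Module R M]
  [AddCommGroup N] [Module R N] [AddCommGroup P] [Module R P]
  (B : M →ₗ[R] N →ₗ[R] P) (F : N →ₗ[R] P) {u u₀ : M}

theorem error_apply_eq_residual (hu : ∀ φ, B u φ = F φ) (φ : N) :
    B (u - u₀) φ = F φ - B u₀ φ := by
  rw [map_sub, LinearMap.sub_apply, hu]

theorem galerkin_orthogonality (N₀ : Submodule R N) (hu : ∀ φ, B u φ = F φ)
    (hu₀ : ∀ φ ∈ N₀, B u₀ φ = F φ) {φ : N} (hφ : φ ∈ N₀) : B (u - u₀) φ = 0 := by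
  rw [error_apply_eq_residual B F hu, hu₀ φ hφ, sub_self]

end Galerkin

theorem dwr_primal_residual_representation_general
    {Y : Type*} [AddCommGroup Y] [Module ℝ Y] (Y₀ : Submodule ℝ Y)
    (J F : Y →ₗ[ℝ] ℝ) (B : Y →ₗ[ℝ] Y →ₗ[ℝ] ℝ)
    (u u₀ z : Y)
    (hprimal : ∀ φ : Y, B u φ = F φ)
    (hprimal₀ : ∀ φ ∈ Y₀, B u₀ φ = F φ)
    (hdual : ∀ φ : Y, B φ z = J φ) :
    ∀ zt ∈ Y₀, J u - J u₀ = F (z - zt) - B u₀ (z - zt) := by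
  intro zt hzt
  calc J u - J u₀ = B (u - u₀) z := by rw [hdual, map_sub]
    _ = B (u - u₀) (z - zt) := by
      rw [map_sub (B (u - u₀)), galerkin_orthogonality B F Y₀ hprimal hprimal₀ hzt, sub_zero]
    _ = F (z - zt) - B u₀ (z - zt) := error_apply_eq_residual B F hprimal _

/-- Goal error equals the primal residual applied to the dual weight `z − zt`. -/
theorem dwr_primal_residual_representation
    {Y : Type*} [AddCommGroup Y] [Module ℝ Y] (Y₀ : Submodule ℝ Y)
    (J F : Y →ₗ[ℝ] ℝ) (B : Y →ₗ[ℝ] Y →ₗ[ℝ] ℝ)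
    (u u₀ z : Y) (hu₀ : u₀ ∈ Y₀)
    (hprimal : ∀ φ : Y, B u φ = F φ)
    (hprimal₀ : ∀ φ ∈ Y₀, B u₀ φ = F φ)
    (hdual : ∀ φ : Y, B φ z = J φ) :
    ∀ zt ∈ Y₀, J u - J u₀ = F (z - zt) - B u₀ (z - zt) :=
  dwr_primal_residual_representation_general Y₀ J F B u u₀ z hprimal hprimal₀ hdual
end
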